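/- arXiv:2107.14327 — 6 statements merged into one kernel-verified Lean document; each statement's English description precedes it below -/
import Mathlib

section
/- If F is a continuous CDF of a nonnegative random variable with finite mean, and the price p is itself drawn from F (independently of B and S), then E_{p∼F}[GFT(p,F)] = (1/2)·∫_0^∞ F(x)(1-F(x)) dx, i.e., posting a random sample from F as the price achieves exactly half of the optimal gains from trade E[(B-S)_+]. -/
/-!
Without atoms, the pairs `(p, q) ∈ s × s` with `q < p` and those with `p < q` have the same
`μ ⊗ μ`-mass and together carry all of `μ s ^ 2`; hence `∫_{p < x} F dμ = F(x)² / 2` and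
`∫_{p ≥ x} (1 - F) dμ = (1 - F(x))² / 2`. Exchanging the order of integration in the expected
gains from trade therefore yields `∫ ((1 - F) F² / 2 + F (1 - F)² / 2) = ½ ∫ F (1 - F)`, as
`F + (1 - F) = 1`. On the other side `(b - s)₊ = ∫ 1{s < x ≤ b} dx`, so `E[(B - S)₊]` is again
`∫ F (1 - F)`. The computation runs in `ℝ≥0∞`; the finite mean makes the tails
`∫_p^∞ (1 - F)` finite, which is what the transfer back to real integrals needs.
-/

open MeasureTheory Set ProbabilityTheory
open scoped ENNReal

lemma nullSingletonClass_of_continuous_cdf (μ : Measure ℝ) [IsProbabilityMeasure μ]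
    (h : Continuous (cdf μ)) : NullSingletonClass μ where
  measure_singleton a := by
    rw [← measure_cdf μ, StieltjesFunction.measure_singleton,
      h.continuousWithinAt.leftLim_eq, sub_self, ENNReal.ofReal_zero]

lemma lintegral_mul_setLIntegral_swap {α β : Type*} [MeasurableSpace α] [MeasurableSpace β]
    {μ : Measure α} {ν : Measure β} [SFinite μ] [SFinite ν] {f : α → ℝ≥0∞} {g : β → ℝ≥0∞}
    (hf : Measurable f) (hg : Measurable g) {R : Set (α × β)} (hR : MeasurableSet R) :
    ∫⁻ a, f a * ∫⁻ b in Prod.mk a ⁻¹' R, g b ∂ν ∂μ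
      = ∫⁻ b, g b * ∫⁻ a in (·, b) ⁻¹' R, f a ∂μ ∂ν := by
  set φ : α × β → ℝ≥0∞ := R.indicator fun q => f q.1 * g q.2
  have hφ : Measurable φ := ((hf.comp measurable_fst).mul (hg.comp measurable_snd)).indicator hR
  have hleft : ∀ a, f a * ∫⁻ b in Prod.mk a ⁻¹' R, g b ∂ν = ∫⁻ b, φ (a, b) ∂ν := fun a => by
    rw [← lintegral_indicator (hR.preimage measurable_prodMk_left),
      ← lintegral_const_mul _ (hg.indicator (hR.preimage measurable_prodMk_left))]
    refine lintegral_congr fun b => ?_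
    by_cases hb : (a, b) ∈ R <;> simp [φ, hb]
  have hright : ∀ b, g b * ∫⁻ a in (·, b) ⁻¹' R, f a ∂μ = ∫⁻ a, φ (a, b) ∂μ := fun b => by
    rw [← lintegral_indicator (hR.preimage measurable_prodMk_right),
      ← lintegral_const_mul _ (hf.indicator (hR.preimage measurable_prodMk_right))]
    refine lintegral_congr fun a => ?_
    by_cases ha : (a, b) ∈ R <;> simp [φ, ha, mul_comm]
  simp_rw [hleft, hright]
  exact lintegral_lintegral_swap hφ.aemeasurable

section Atomless

variable {μ : Measure ℝ} {s : Set ℝ}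

lemma setLIntegral_measure_inter_Iio_eq_Ioi [SFinite μ] (hs : MeasurableSet s) :
    ∫⁻ p in s, μ (s ∩ Iio p) ∂μ = ∫⁻ p in s, μ (s ∩ Ioi p) ∂μ := by
  have hR : MeasurableSet {q : ℝ × ℝ | q.1 ∈ s ∧ q.2 ∈ s ∧ q.2 < q.1} :=
    (measurable_fst hs).inter ((measurable_snd hs).inter
      (measurableSet_lt measurable_snd measurable_fst))
  calc ∫⁻ p in s, μ (s ∩ Iio p) ∂μ = μ.prod μ {q : ℝ × ℝ | q.1 ∈ s ∧ q.2 ∈ s ∧ q.2 < q.1} := by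
        rw [Measure.prod_apply hR, ← lintegral_indicator hs]
        refine lintegral_congr fun p => ?_
        by_cases hp : p ∈ s <;> simp [hp, inter_def, Iio]
    _ = ∫⁻ p in s, μ (s ∩ Ioi p) ∂μ := by
        rw [Measure.prod_apply_symm hR, ← lintegral_indicator hs]
        refine lintegral_congr fun p => ?_
        by_cases hp : p ∈ s <;> simp [hp, inter_def, Ioi]

lemma measure_inter_Iio_add_measure_inter_Ioi [NullSingletonClass μ] (hs : MeasurableSet s)
    (p : ℝ) : μ (s ∩ Iio p) + μ (s ∩ Ioi p) = μ s := by
  rw [← measure_union (Ioi_disjoint_Iio_same.symm.mono inter_subset_right inter_subset_right)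
    (hs.inter measurableSet_Ioi), ← inter_union_distrib_left, Iio_union_Ioi, ← sdiff_eq,
    measure_sdiff_null (measure_singleton p)]

lemma setLIntegral_measure_inter_Iio_add_Ioi [NullSingletonClass μ] (hs : MeasurableSet s) :
    ∫⁻ p in s, μ (s ∩ Iio p) ∂μ + ∫⁻ p in s, μ (s ∩ Ioi p) ∂μ = μ s ^ 2 := by
  have hmeas : Measurable fun p => μ (s ∩ Iio p) :=
    Monotone.measurable fun _ _ h => measure_mono (inter_subset_inter_right _ (Iio_subset_Iio h))
  rw [← lintegral_add_left hmeas]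
  simp_rw [measure_inter_Iio_add_measure_inter_Ioi hs]
  rw [setLIntegral_const, sq]

lemma setLIntegral_measure_inter_Iio [SFinite μ] [NullSingletonClass μ] (hs : MeasurableSet s) :
    ∫⁻ p in s, μ (s ∩ Iio p) ∂μ = μ s ^ 2 / 2 := by
  rw [ENNReal.eq_div_iff two_ne_zero ENNReal.ofNat_ne_top, two_mul,
    ← setLIntegral_measure_inter_Iio_add_Ioi hs, ← setLIntegral_measure_inter_Iio_eq_Ioi hs]

lemma setLIntegral_measure_inter_Ioi [SFinite μ] [NullSingletonClass μ] (hs : MeasurableSet s) :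
    ∫⁻ p in s, μ (s ∩ Ioi p) ∂μ = μ s ^ 2 / 2 := by
  rw [← setLIntegral_measure_inter_Iio_eq_Ioi hs, setLIntegral_measure_inter_Iio hs]

lemma setLIntegral_Iio_measure_Iic [SFinite μ] [NullSingletonClass μ] (x : ℝ) :
    ∫⁻ p in Iio x, μ (Iic p) ∂μ = μ (Iic x) ^ 2 / 2 := by
  rw [← measure_congr (Iio_ae_eq_Iic (a := x)),
    ← setLIntegral_measure_inter_Iio measurableSet_Iio]
  refine setLIntegral_congr_fun measurableSet_Iio fun p hp => ?_
  rw [inter_eq_right.2 (Iio_subset_Iio hp.le), measure_congr Iio_ae_eq_Iic]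

lemma setLIntegral_Ici_measure_Ioi [SFinite μ] [NullSingletonClass μ] (x : ℝ) :
    ∫⁻ p in Ici x, μ (Ioi p) ∂μ = μ (Ioi x) ^ 2 / 2 := by
  rw [measure_congr (Ioi_ae_eq_Ici (a := x)), ← setLIntegral_measure_inter_Ioi measurableSet_Ici]
  exact setLIntegral_congr_fun measurableSet_Ici fun p hp => by
    rw [inter_eq_right.2 (Ioi_subset_Ici hp)]

end Atomless

lemma measurable_measure_Iic (μ : Measure ℝ) : Measurable fun x => μ (Iic x) :=
  Monotone.measurable fun _ _ h => measure_mono (Iic_subset_Iic.2 h)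

lemma measurable_measure_Ioi (μ : Measure ℝ) : Measurable fun x => μ (Ioi x) :=
  Antitone.measurable fun _ _ h => measure_mono (Ioi_subset_Ioi h)

lemma lintegral_measure_Iic_mul_add_measure_Ioi_mul (μ : Measure ℝ) [IsProbabilityMeasure μ]
    [NullSingletonClass μ] :
    ∫⁻ p, (μ (Iic p) * (∫⁻ x in Ioi p, μ (Ioi x)) + μ (Ioi p) * ∫⁻ x in Iic p, μ (Iic x)) ∂μ
      = (∫⁻ x, μ (Iic x) * μ (Ioi x)) / 2 := by
  have hIic := measurable_measure_Iic μ
  have hIoi := measurable_measure_Ioi μ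
  have hbuy : ∫⁻ p, μ (Iic p) * (∫⁻ x in Ioi p, μ (Ioi x)) ∂μ
      = ∫⁻ x, μ (Ioi x) * ∫⁻ p in Iio x, μ (Iic p) ∂μ :=
    lintegral_mul_setLIntegral_swap (μ := μ) (ν := volume) hIic hIoi
      (measurableSet_lt measurable_fst measurable_snd)
  have hsell : ∫⁻ p, μ (Ioi p) * (∫⁻ x in Iic p, μ (Iic x)) ∂μ
      = ∫⁻ x, μ (Iic x) * ∫⁻ p in Ici x, μ (Ioi p) ∂μ :=
    lintegral_mul_setLIntegral_swap (μ := μ) (ν := volume) hIoi hIic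
      (measurableSet_le measurable_snd measurable_fst)
  have hT : Measurable fun p => ∫⁻ x in Ioi p, μ (Ioi x) :=
    Antitone.measurable fun _ _ h => lintegral_mono_set (Ioi_subset_Ioi h)
  have hS : Measurable fun x => ∫⁻ p in Iio x, μ (Iic p) ∂μ :=
    Monotone.measurable fun _ _ h => lintegral_mono_set (Iio_subset_Iio h)
  rw [lintegral_add_left (f := fun p => μ (Iic p) * ∫⁻ x in Ioi p, μ (Ioi x)) (hIic.mul hT),
    hbuy, hsell,
    ← lintegral_add_left (f := fun x => μ (Ioi x) * ∫⁻ p in Iio x, μ (Iic p) ∂μ) (hIoi.mul hS),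
    div_eq_mul_inv,
    ← lintegral_mul_const (f := fun x => μ (Iic x) * μ (Ioi x)) _ (hIic.mul hIoi)]
  refine lintegral_congr fun x => ?_
  rw [setLIntegral_Iio_measure_Iic, setLIntegral_Ici_measure_Ioi]
  have hsum : μ (Iic x) + μ (Ioi x) = 1 := by
    rw [← compl_Iic, prob_add_prob_compl measurableSet_Iic]
  calc μ (Ioi x) * (μ (Iic x) ^ 2 / 2) + μ (Iic x) * (μ (Ioi x) ^ 2 / 2)
      = μ (Iic x) * μ (Ioi x) * 2⁻¹ * (μ (Iic x) + μ (Ioi x)) := by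
        simp only [div_eq_mul_inv]; ring
    _ = μ (Iic x) * μ (Ioi x) * 2⁻¹ := by rw [hsum, mul_one]

lemma lintegral_ofReal_sub_prod (μ ν : Measure ℝ) [SFinite μ] [SFinite ν] :
    ∫⁻ q, ENNReal.ofReal (q.1 - q.2) ∂(μ.prod ν) = ∫⁻ x, μ (Ici x) * ν (Iio x) := by
  set R : Set ((ℝ × ℝ) × ℝ) := {r | r.1.2 < r.2 ∧ r.2 ≤ r.1.1}
  have hR : MeasurableSet R :=
    (measurableSet_lt (measurable_snd.comp measurable_fst) measurable_snd).inter
      (measurableSet_le measurable_snd (measurable_fst.comp measurable_fst))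
  calc ∫⁻ q, ENNReal.ofReal (q.1 - q.2) ∂(μ.prod ν)
      = ∫⁻ q, volume (Prod.mk q ⁻¹' R) ∂(μ.prod ν) :=
        lintegral_congr fun q => (Real.volume_Ioc).symm
    _ = ∫⁻ x, μ.prod ν ((·, x) ⁻¹' R) := by
        rw [← Measure.prod_apply hR, Measure.prod_apply_symm hR]
    _ = ∫⁻ x, μ (Ici x) * ν (Iio x) := by
        refine lintegral_congr fun x => ?_
        rw [← Measure.prod_prod]
        congr 1
        ext q
        exact and_comm

lemma one_sub_cdf (μ : Measure ℝ) [IsProbabilityMeasure μ] (x : ℝ) :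
    1 - cdf μ x = (μ (Ioi x)).toReal := by
  rw [cdf_eq_real, ← probReal_compl_eq_one_sub measurableSet_Iic, compl_Iic, measureReal_def]

lemma integral_Ioi_one_sub_cdf (μ : Measure ℝ) [IsProbabilityMeasure μ] (p : ℝ) :
    ∫ x in Ioi p, (1 - cdf μ x) = (∫⁻ x in Ioi p, μ (Ioi x)).toReal := by
  simp_rw [one_sub_cdf]
  exact integral_toReal (measurable_measure_Ioi μ).aemeasurable
    (ae_of_all _ fun _ => measure_lt_top _ _)

section Nonneg

variable {μ : Measure ℝ} [NullSingletonClass μ]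

lemma indicator_Ioi_measure_Iic (hsupp : μ (Iio 0) = 0) :
    (Ioi 0).indicator (fun x => μ (Iic x)) = fun x => μ (Iic x) := by
  refine indicator_eq_self.2 fun x hx => ?_
  by_contra hx0
  apply hx
  rw [measure_congr Iio_ae_eq_Iic] at hsupp
  exact measure_mono_null (Iic_subset_Iic.2 (not_lt.1 hx0)) hsupp

lemma setLIntegral_Iic_measure_Iic (hsupp : μ (Iio 0) = 0) (p : ℝ) :
    ∫⁻ x in Iic p, μ (Iic x) = ∫⁻ x in Ioc 0 p, μ (Iic x) := by
  rw [← Ioi_inter_Iic, ← setLIntegral_indicator measurableSet_Ioi, indicator_Ioi_measure_Iic hsupp]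

lemma setLIntegral_Iic_measure_Iic_ne_top [IsProbabilityMeasure μ] (hsupp : μ (Iio 0) = 0)
    (p : ℝ) : ∫⁻ x in Iic p, μ (Iic x) ≠ ∞ := by
  rw [setLIntegral_Iic_measure_Iic hsupp]
  exact (setLIntegral_lt_top_of_le_nnreal (by simp [Real.volume_Ioc])
    ⟨1, fun _ _ => by simpa using prob_le_one⟩).ne

lemma integral_Ioc_cdf [IsProbabilityMeasure μ] (hsupp : μ (Iio 0) = 0) (p : ℝ) :
    ∫ x in Ioc 0 p, cdf μ x = (∫⁻ x in Iic p, μ (Iic x)).toReal := by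
  simp_rw [cdf_eq_real, measureReal_def, setLIntegral_Iic_measure_Iic hsupp]
  exact integral_toReal (measurable_measure_Iic μ).aemeasurable
    (ae_of_all _ fun _ => measure_lt_top _ _)

end Nonneg

lemma setLIntegral_Ioi_zero_measure_Ioi_ne_top {μ : Measure ℝ} (hsupp : μ (Iio 0) = 0)
    (hmean : Integrable id μ) : ∫⁻ x in Ioi 0, μ (Ioi x) ≠ ∞ := by
  have hnn : 0 ≤ᵐ[μ] id := measure_mono_null (fun x (hx : ¬ 0 ≤ x) => not_le.1 hx) hsupp
  exact ((lintegral_eq_lintegral_meas_lt μ hnn aemeasurable_id).symm.trans_lt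
    hmean.lintegral_lt_top).ne

lemma setLIntegral_Ioi_measure_Ioi_ne_top {μ : Measure ℝ} [IsProbabilityMeasure μ] {a : ℝ}
    (ha : ∫⁻ x in Ioi a, μ (Ioi x) ≠ ∞) (p : ℝ) : ∫⁻ x in Ioi p, μ (Ioi x) ≠ ∞ := by
  have hsub : Ioi p ⊆ Ioc p a ∪ Ioi a := fun x hx => by
    rcases le_or_gt x a with h | h
    exacts [Or.inl ⟨hx, h⟩, Or.inr h]
  refine ne_top_of_le_ne_top (ENNReal.add_ne_top.2 ⟨?_, ha⟩)
    ((lintegral_mono_set hsub).trans (lintegral_union_le _ _ _))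
  exact (setLIntegral_lt_top_of_le_nnreal (by simp [Real.volume_Ioc])
    ⟨1, fun _ _ => by simpa using prob_le_one⟩).ne

section Probability

variable {μ : Measure ℝ} [IsProbabilityMeasure μ] [NullSingletonClass μ]

lemma integral_Ioi_cdf_mul_one_sub_cdf (hsupp : μ (Iio 0) = 0) :
    ∫ x in Ioi 0, cdf μ x * (1 - cdf μ x) = (∫⁻ x, μ (Iic x) * μ (Ioi x)).toReal := by
  simp_rw [one_sub_cdf, cdf_eq_real, measureReal_def, ← ENNReal.toReal_mul]
  rw [integral_toReal (f := fun x => μ (Iic x) * μ (Ioi x))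
    ((measurable_measure_Iic μ).mul (measurable_measure_Ioi μ)).aemeasurable
    (ae_of_all _ fun _ => ENNReal.mul_lt_top (measure_lt_top _ _) (measure_lt_top _ _)),
    ← lintegral_indicator measurableSet_Ioi]
  simp_rw [indicator_mul_left, indicator_Ioi_measure_Iic hsupp]

lemma integral_max_sub_zero_prod :
    ∫ q, max (q.1 - q.2) 0 ∂(μ.prod μ) = (∫⁻ x, μ (Iic x) * μ (Ioi x)).toReal := by
  simp_rw [← ENNReal.toReal_ofReal']
  rw [integral_toReal (f := fun q : ℝ × ℝ => ENNReal.ofReal (q.1 - q.2))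
    (ENNReal.measurable_ofReal.comp (measurable_fst.sub measurable_snd)).aemeasurable
    (ae_of_all _ fun _ => ENNReal.ofReal_lt_top), lintegral_ofReal_sub_prod]
  simp_rw [measure_congr (Iio_ae_eq_Iic (μ := μ)), ← measure_congr (Ioi_ae_eq_Ici (μ := μ)),
    mul_comm]

lemma integral_gainsFromTrade_eq_toReal (hsupp : μ (Iio 0) = 0) (hmean : Integrable id μ) :
    ∫ p, (cdf μ p * (∫ x in Ioi p, (1 - cdf μ x))
        + (1 - cdf μ p) * (∫ x in Ioc 0 p, cdf μ x)) ∂μ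
      = (∫⁻ p, (μ (Iic p) * (∫⁻ x in Ioi p, μ (Ioi x))
          + μ (Ioi p) * ∫⁻ x in Iic p, μ (Iic x)) ∂μ).toReal := by
  have hT := setLIntegral_Ioi_measure_Ioi_ne_top
    (setLIntegral_Ioi_zero_measure_Ioi_ne_top hsupp hmean)
  have hU := setLIntegral_Iic_measure_Iic_ne_top hsupp
  have hmeas : Measurable fun p => μ (Iic p) * (∫⁻ x in Ioi p, μ (Ioi x))
      + μ (Ioi p) * ∫⁻ x in Iic p, μ (Iic x) :=
    ((measurable_measure_Iic μ).mul
      (Antitone.measurable fun _ _ h => lintegral_mono_set (Ioi_subset_Ioi h))).add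
    ((measurable_measure_Ioi μ).mul
      (Monotone.measurable fun _ _ h => lintegral_mono_set (Iic_subset_Iic.2 h)))
  rw [← integral_toReal hmeas.aemeasurable (ae_of_all _ fun p => ENNReal.add_lt_top.2
    ⟨ENNReal.mul_lt_top (measure_lt_top _ _) (hT p).lt_top,
      ENNReal.mul_lt_top (measure_lt_top _ _) (hU p).lt_top⟩)]
  refine integral_congr_ae (ae_of_all _ fun p => ?_)
  dsimp only
  rw [integral_Ioi_one_sub_cdf, integral_Ioc_cdf hsupp, one_sub_cdf, cdf_eq_real,
    measureReal_def, ENNReal.toReal_add (ENNReal.mul_ne_top (measure_ne_top _ _) (hT p))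
      (ENNReal.mul_ne_top (measure_ne_top _ _) (hU p)), ENNReal.toReal_mul, ENNReal.toReal_mul]

end Probability

/-- If `F` is a continuous CDF of a nonnegative random variable with finite mean, and the
price `p` is itself drawn from `F`, then `E_{p∼F}[GFT(p,F)] = (1/2)·∫_0^∞ F(x)(1-F(x)) dx`,
i.e., posting a random sample from `F` as the price achieves exactly half of the optimal
gains from trade `E[(B-S)_+]`. -/
theorem stmt_2 (μ : Measure ℝ) [IsProbabilityMeasure μ]
    (hsupp : μ (Set.Iio 0) = 0) (hmean : Integrable id μ)
    (F : ℝ → ℝ) (hF : ∀ x, F x = (μ (Set.Iic x)).toReal) (hcont : Continuous F) :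
    (∫ p, (F p * (∫ x in Set.Ioi p, (1 - F x))
        + (1 - F p) * (∫ x in Set.Ioc (0:ℝ) p, F x)) ∂μ)
      = (1/2) * ∫ x in Set.Ioi (0:ℝ), F x * (1 - F x)
    ∧ (∫ p, (F p * (∫ x in Set.Ioi p, (1 - F x))
        + (1 - F p) * (∫ x in Set.Ioc (0:ℝ) p, F x)) ∂μ)
      = (1/2) * ∫ q : ℝ × ℝ, max (q.1 - q.2) 0 ∂(μ.prod μ) := by
  obtain rfl : F = cdf μ := funext fun x => (hF x).trans (cdf_eq_real μ x).symm
  have := nullSingletonClass_of_continuous_cdf μ hcont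
  rw [integral_gainsFromTrade_eq_toReal hsupp hmean, lintegral_measure_Iic_mul_add_measure_Ioi_mul,
    integral_Ioi_cdf_mul_one_sub_cdf hsupp, integral_max_sub_zero_prod, ENNReal.toReal_div]
  constructor <;> simp [div_eq_inv_mul]
end

section
/- Posting a sample from F as the price achieves at least 3/4 of the optimal welfare in the symmetric setting: for any continuous CDF F of a nonnegative random variable with finite positive mean μ, (μ + (1/2)·∫_0^∞ F(x)(1-F(x)) dx) / (μ + ∫_0^∞ F(x)(1-F(x)) dx) ≥ 3/4. -/
open MeasureTheory Set Filter

/-!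
Since `0 ≤ F ≤ 1`, the welfare gain `I = ∫ F (1 - F)` is squeezed between `0` and
`μ = ∫ (1 - F)`, and `(μ + I / 2) / (μ + I) ≥ 3 / 4` is equivalent to `I ≤ μ`.
-/

lemma three_quarters_le_add_half_div_add {a b : ℝ} (ha : 0 < a) (hb : 0 ≤ b) (hba : b ≤ a) :
    3 / 4 ≤ (a + 1 / 2 * b) / (a + b) := by
  rw [le_div_iff₀ (by linarith)]
  linarith

lemma mul_one_sub_le_one_sub {x : ℝ} (h : 0 ≤ x ∧ x ≤ 1) : x * (1 - x) ≤ 1 - x := by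
  nlinarith

lemma mul_one_sub_nonneg {x : ℝ} (h : 0 ≤ x ∧ x ≤ 1) : 0 ≤ x * (1 - x) := by
  nlinarith

section UnitInterval

variable {α : Type*} [MeasurableSpace α] {ν : Measure α} {s : Set α} {F : α → ℝ}

lemma integrableOn_mul_one_sub (hF : ∀ x, 0 ≤ F x ∧ F x ≤ 1)
    (hint : IntegrableOn (fun x => 1 - F x) s ν) :
    IntegrableOn (fun x => F x * (1 - F x)) s ν := by
  -- `F = 1 - (1 - F)` inherits measurability from `1 - F`
  have hmeas : AEStronglyMeasurable (fun x => F x * (1 - F x)) (ν.restrict s) := by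
    have h := hint.aestronglyMeasurable
    convert (aestronglyMeasurable_const (b := (1 : ℝ)).sub h).mul h using 1
    ext x
    simp
  refine hint.mono' hmeas (Eventually.of_forall fun x => ?_)
  rw [Real.norm_of_nonneg (mul_one_sub_nonneg (hF x))]
  exact mul_one_sub_le_one_sub (hF x)

lemma setIntegral_mul_one_sub_le (hF : ∀ x, 0 ≤ F x ∧ F x ≤ 1) (hs : MeasurableSet s)
    (hint : IntegrableOn (fun x => 1 - F x) s ν) :
    ∫ x in s, F x * (1 - F x) ∂ν ≤ ∫ x in s, (1 - F x) ∂ν :=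
  setIntegral_mono_on (integrableOn_mul_one_sub hF hint) hint hs fun x _ =>
    mul_one_sub_le_one_sub (hF x)

lemma setIntegral_mul_one_sub_nonneg (hF : ∀ x, 0 ≤ F x ∧ F x ≤ 1) (hs : MeasurableSet s) :
    0 ≤ ∫ x in s, F x * (1 - F x) ∂ν :=
  setIntegral_nonneg hs fun x _ => mul_one_sub_nonneg (hF x)

end UnitInterval

theorem stmt_8_general (F : ℝ → ℝ)
    (h01 : ∀ x, 0 ≤ F x ∧ F x ≤ 1)
    (hint : IntegrableOn (fun x => 1 - F x) (Set.Ioi 0))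
    (μ : ℝ) (hμ : μ = ∫ x in Set.Ioi (0:ℝ), (1 - F x)) (hpos : 0 < μ) :
    (μ + (1/2) * ∫ x in Set.Ioi (0:ℝ), F x * (1 - F x))
      / (μ + ∫ x in Set.Ioi (0:ℝ), F x * (1 - F x)) ≥ 3/4 := by
  subst hμ
  exact three_quarters_le_add_half_div_add hpos
    (setIntegral_mul_one_sub_nonneg h01 measurableSet_Ioi)
    (setIntegral_mul_one_sub_le h01 measurableSet_Ioi hint)

/-- Posting a sample from `F` as the price achieves at least `3/4` of the optimal welfare in
the symmetric setting: for any continuous CDF `F` of a nonnegative random variable with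
finite positive mean `μ`,
`(μ + (1/2)·∫_0^∞ F(1-F)) / (μ + ∫_0^∞ F(1-F)) ≥ 3/4`. -/
theorem stmt_8 (F : ℝ → ℝ) (hcont : Continuous F) (hmono : Monotone F)
    (h01 : ∀ x, 0 ≤ F x ∧ F x ≤ 1)
    (hint : IntegrableOn (fun x => 1 - F x) (Set.Ioi 0))
    (μ : ℝ) (hμ : μ = ∫ x in Set.Ioi (0:ℝ), (1 - F x)) (hpos : 0 < μ) :
    (μ + (1/2) * ∫ x in Set.Ioi (0:ℝ), F x * (1 - F x))
      / (μ + ∫ x in Set.Ioi (0:ℝ), F x * (1 - F x)) ≥ 3/4 :=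
  stmt_8_general F h01 hint μ hμ hpos
end

section
/- For the family of CDFs F_r(x) = min(x^r, 1) on [0,1] parameterized by r > 0, the welfare ratio (μ_r + (1/2)∫_0^1 x^r(1-x^r) dx)/(μ_r + ∫_0^1 x^r(1-x^r) dx), where μ_r = r/(r+1), tends to 3/4 as r → 0⁺. Hence the 3/4 bound for the single-sample mechanism is tight. -/
open MeasureTheory Set Filter

/-! For `r > 0` the integral equals `1/(r+1) - 1/(2r+1) = r/((r+1)(2r+1))`, so the welfare ratio
is the rational function `(4r+3)/(4(r+1))` of `r`, which is continuous at `0` with value `3/4`. -/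

lemma integral_rpow_mul_one_sub_rpow {r : ℝ} (hr : -(1 / 2) < r) :
    ∫ x in (0:ℝ)..1, x ^ r * (1 - x ^ r) = 1 / (r + 1) - 1 / (2 * r + 1) := by
  have hsq : ∀ x ∈ uIcc (0:ℝ) 1, x ^ r * (1 - x ^ r) = x ^ r - x ^ (r * 2) := by
    intro x hx
    rw [uIcc_of_le zero_le_one] at hx
    rw [show r * 2 = r * ((2 : ℕ) : ℝ) by norm_num, Real.rpow_mul_natCast hx.1]
    ring
  have hr₁ : -1 < r := by linarith
  have hr₂ : -1 < r * 2 := by linarith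
  rw [intervalIntegral.integral_congr hsq,
    intervalIntegral.integral_sub (intervalIntegral.intervalIntegrable_rpow' hr₁)
      (intervalIntegral.intervalIntegrable_rpow' hr₂),
    integral_rpow (Or.inl hr₁), integral_rpow (Or.inl hr₂), Real.one_rpow, Real.one_rpow,
    Real.zero_rpow (by linarith), Real.zero_rpow (by linarith)]
  ring

lemma welfare_ratio_eq {r : ℝ} (hr : 0 < r) :
    (r / (r + 1) + (1 / 2) * ∫ x in (0:ℝ)..1, x ^ r * (1 - x ^ r))
        / (r / (r + 1) + ∫ x in (0:ℝ)..1, x ^ r * (1 - x ^ r))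
      = (4 * r + 3) / (4 * (r + 1)) := by
  rw [integral_rpow_mul_one_sub_rpow (by linarith)]
  have h₁ : r + 1 ≠ 0 := by linarith
  have h₂ : 2 * r + 1 ≠ 0 := by linarith
  have hden : r / (r + 1) + (1 / (r + 1) - 1 / (2 * r + 1)) = 2 * r / (2 * r + 1) := by
    field_simp
    ring
  rw [hden, div_eq_div_iff (by positivity) (by positivity)]
  field_simp
  ring

lemma tendsto_welfare_ratio_nhds_zero :
    Tendsto (fun r : ℝ => (4 * r + 3) / (4 * (r + 1))) (nhds 0) (nhds (3 / 4)) := by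
  have hcont : ContinuousAt (fun r : ℝ => (4 * r + 3) / (4 * (r + 1))) 0 :=
    ContinuousAt.div (by fun_prop) (by fun_prop) (by norm_num)
  simpa using hcont.tendsto

/-- For the family of CDFs `F_r(x) = min(x^r, 1)` with mean `μ_r = r/(r+1)`, the welfare
ratio `(μ_r + (1/2)∫_0^1 x^r(1-x^r) dx)/(μ_r + ∫_0^1 x^r(1-x^r) dx)` tends to `3/4` as
`r → 0⁺`; hence the `3/4` bound for the single-sample mechanism is tight. -/
theorem stmt_9 :
    Tendsto (fun r : ℝ =>
        (r/(r+1) + (1/2) * ∫ x in (0:ℝ)..1, x ^ r * (1 - x ^ r))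
          / (r/(r+1) + ∫ x in (0:ℝ)..1, x ^ r * (1 - x ^ r)))
      (nhdsWithin 0 (Set.Ioi 0)) (nhds (3/4)) := by
  refine (tendsto_welfare_ratio_nhds_zero.mono_left nhdsWithin_le_nhds).congr' ?_
  filter_upwards [self_mem_nhdsWithin] with r hr
  exact (welfare_ratio_eq hr).symm
end

section
/- Posting the mean maximizes welfare in symmetric bilateral trade: for the function W(p) = μ·(1+F(p)) − p·F(p) + ∫_0^p F(x) dx, where μ is the mean of F, one has W(μ) ≥ W(p) for all p ≥ 0. -/
open MeasureTheory Set

/-! The welfare difference is `W(μ) - W(p) = ∫_p^μ (F x - F p) dx`, which is nonnegative for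
either order of `p` and `μ` because `F` is monotone. -/

theorem MonotoneOn.sub_mul_le_intervalIntegral {F : ℝ → ℝ} {a b : ℝ}
    (hF : MonotoneOn F (uIcc a b)) : (b - a) * F a ≤ ∫ x in a..b, F x := by
  rcases le_total a b with hab | hba
  · have hFa : ∀ x ∈ Icc a b, F a ≤ F x := fun x hx =>
      hF left_mem_uIcc (by rwa [uIcc_of_le hab]) hx.1
    have hle : ∫ _ in a..b, F a ≤ ∫ x in a..b, F x :=
      intervalIntegral.integral_mono_on hab intervalIntegrable_const hF.intervalIntegrable hFa
    simpa using hle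
  · have hFa : ∀ x ∈ Icc b a, F x ≤ F a := fun x hx =>
      hF (by rwa [uIcc_of_ge hba]) left_mem_uIcc hx.2
    have hle : ∫ x in b..a, F x ≤ ∫ _ in b..a, F a :=
      intervalIntegral.integral_mono_on hba hF.intervalIntegrable.symm intervalIntegrable_const hFa
    rw [intervalIntegral.integral_const, smul_eq_mul] at hle
    rw [intervalIntegral.integral_symm]
    linarith

theorem stmt_11_general (F : ℝ → ℝ) (hmono : Monotone F)
    (μ : ℝ)
    (p : ℝ) :
    μ * (1 + F p) - p * F p + ∫ x in (0:ℝ)..p, F x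
      ≤ μ * (1 + F μ) - μ * F μ + ∫ x in (0:ℝ)..μ, F x := by
  have hsplit : (∫ x in (0:ℝ)..p, F x) + (∫ x in p..μ, F x) = ∫ x in (0:ℝ)..μ, F x :=
    intervalIntegral.integral_add_adjacent_intervals
      (hmono.monotoneOn _).intervalIntegrable (hmono.monotoneOn _).intervalIntegrable
  have hgain : (μ - p) * F p ≤ ∫ x in p..μ, F x :=
    (hmono.monotoneOn _).sub_mul_le_intervalIntegral
  linarith

/-- Posting the mean maximizes welfare in symmetric bilateral trade: for
`W(p) = μ·(1+F(p)) − p·F(p) + ∫_0^p F(x) dx`, where `μ` is the mean of the CDF `F` of a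
nonnegative random variable, one has `W(μ) ≥ W(p)` for all `p ≥ 0`. -/
theorem stmt_11 (F : ℝ → ℝ) (hmono : Monotone F)
    (h01 : ∀ x, 0 ≤ F x ∧ F x ≤ 1)
    (hint : IntegrableOn (fun x => 1 - F x) (Set.Ioi 0))
    (μ : ℝ) (hμ : μ = ∫ x in Set.Ioi (0:ℝ), (1 - F x)) (hpos : 0 < μ)
    (p : ℝ) (hp : 0 ≤ p) :
    μ * (1 + F p) - p * F p + ∫ x in (0:ℝ)..p, F x
      ≤ μ * (1 + F μ) - μ * F μ + ∫ x in (0:ℝ)..μ, F x :=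
  stmt_11_general F hmono μ p
end

section
/- Welfare-loss bound (Lemma on q,r): if q ≤ 1/5 and r ≤ 1/5, then r(1−q) + (1−r)q = 1/2 − 2(1/2−q)(1/2−r) ≤ 8/25; consequently the fixed price p* with q = P[S ≥ p*] ≤ 1/5 and r = E[B·1_{B≤p*}]/E[B] ≤ 1/5 guarantees welfare W(p*;F_S,F_B) ≥ (17/25)·OPT-W(F_S,F_B). -/
/-!
At price `p` the welfare loss against the first best `max b s` is at most `b` when the buyer is
priced out (`b ≤ p`) and the seller would have traded (`s < p`), or when the buyer would buy
(`p < b`) but the seller refuses (`p ≤ s`). By independence this integrates to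
`r (1 - q) E[B] + (1 - r) q E[B]`, where `q = P[S ≥ p]` and `r = E[B; B ≤ p] / E[B]`, and for
`q, r ≤ 1/5` this is at most `(8/25) E[B] ≤ (8/25) E[max B S]`.
-/

open MeasureTheory Set

lemma mul_one_sub_add_one_sub_mul_eq (q r : ℝ) :
    r * (1 - q) + (1 - r) * q = 1/2 - 2 * (1/2 - q) * (1/2 - r) := by
  ring

lemma mul_one_sub_add_one_sub_mul_le {q r : ℝ} (hq : q ≤ 1/5) (hr : r ≤ 1/5) :
    r * (1 - q) + (1 - r) * q ≤ 8/25 := by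
  rw [mul_one_sub_add_one_sub_mul_eq]
  nlinarith [mul_nonneg (sub_nonneg.2 hq) (sub_nonneg.2 hr)]

/-- `x = (b, s)`; trade happens exactly when `s ≤ p < b`. -/
noncomputable def fixedPriceWelfare (p : ℝ) (x : ℝ × ℝ) : ℝ :=
  x.2 + (x.1 - x.2) * {x : ℝ × ℝ | p < x.1 ∧ x.2 ≤ p}.indicator (fun _ => (1 : ℝ)) x

lemma max_le_fixedPriceWelfare_add {b s : ℝ} (hb : 0 ≤ b) (hs : 0 ≤ s) (p : ℝ) :
    max b s ≤ fixedPriceWelfare p (b, s)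
      + ((Iic p).indicator id b * (Iio p).indicator 1 s
        + (Ioi p).indicator id b * (Ici p).indicator 1 s) := by
  simp only [fixedPriceWelfare, indicator_apply, mem_ofPred_eq, mem_Iic, mem_Iio, mem_Ioi,
    mem_Ici, id, Pi.one_apply]
  split_ifs <;> grind

lemma ae_nonneg_of_measure_Iio_zero {μ : Measure ℝ} (h : μ (Iio 0) = 0) : ∀ᵐ x ∂μ, 0 ≤ x :=
  ae_iff.2 (by simpa [not_le, ← Iio_def] using h)

lemma integral_indicator_id_mul_indicator_one_prod (μ ν : Measure ℝ) [SFinite μ] [SFinite ν]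
    {s t : Set ℝ} (hs : MeasurableSet s) (ht : MeasurableSet t) :
    ∫ x, s.indicator id x.1 * t.indicator 1 x.2 ∂μ.prod ν = (∫ b in s, b ∂μ) * ν.real t := by
  rw [integral_prod_mul, integral_indicator hs, integral_indicator_one ht]
  rfl

lemma integrable_fixedPriceWelfare {μ : Measure (ℝ × ℝ)} (h1 : Integrable Prod.fst μ)
    (h2 : Integrable Prod.snd μ) (p : ℝ) : Integrable (fixedPriceWelfare p) μ := by
  have hA : MeasurableSet {x : ℝ × ℝ | p < x.1 ∧ x.2 ≤ p} :=
    (measurableSet_lt measurable_const measurable_fst).inter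
      (measurableSet_le measurable_snd measurable_const)
  refine h2.add ((h1.sub h2).mul_bdd (c := 1) ?_ (ae_of_all _ fun x => ?_))
  · exact (measurable_const.indicator hA).aestronglyMeasurable
  · exact (norm_indicator_le_norm_self _ x).trans_eq norm_one

section

variable {μB μS : Measure ℝ} [IsFiniteMeasure μB] [IsFiniteMeasure μS]

theorem integral_max_le_integral_fixedPriceWelfare_add (hB : ∀ᵐ b ∂μB, 0 ≤ b)
    (hS : ∀ᵐ s ∂μS, 0 ≤ s) (hiB : Integrable id μB) (hiS : Integrable id μS) (p : ℝ) :
    ∫ x, max x.1 x.2 ∂μB.prod μS ≤ ∫ x, fixedPriceWelfare p x ∂μB.prod μS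
      + ((∫ b in Iic p, b ∂μB) * μS.real (Iio p) + (∫ b in Ioi p, b ∂μB) * μS.real (Ici p)) := by
  have h1 : Integrable Prod.fst (μB.prod μS) := hiB.comp_fst μS
  have h2 : Integrable Prod.snd (μB.prod μS) := hiS.comp_snd μB
  have hloss₁ : Integrable (fun x : ℝ × ℝ => (Iic p).indicator id x.1 * (Iio p).indicator 1 x.2)
      (μB.prod μS) :=
    (hiB.indicator measurableSet_Iic).mul_prod ((integrable_const 1).indicator measurableSet_Iio)
  have hloss₂ : Integrable (fun x : ℝ × ℝ => (Ioi p).indicator id x.1 * (Ici p).indicator 1 x.2)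
      (μB.prod μS) :=
    (hiB.indicator measurableSet_Ioi).mul_prod ((integrable_const 1).indicator measurableSet_Ici)
  have hloss : Integrable (fun x : ℝ × ℝ => (Iic p).indicator id x.1 * (Iio p).indicator 1 x.2
      + (Ioi p).indicator id x.1 * (Ici p).indicator 1 x.2) (μB.prod μS) := hloss₁.add hloss₂
  have hW := integrable_fixedPriceWelfare h1 h2 p
  calc ∫ x, max x.1 x.2 ∂μB.prod μS
      ≤ ∫ x, fixedPriceWelfare p x + ((Iic p).indicator id x.1 * (Iio p).indicator 1 x.2
          + (Ioi p).indicator id x.1 * (Ici p).indicator 1 x.2) ∂μB.prod μS := by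
        refine integral_mono_ae (h1.sup h2) (hW.add hloss) ?_
        filter_upwards [Measure.quasiMeasurePreserving_fst.ae hB,
          Measure.quasiMeasurePreserving_snd.ae hS] with x hb hs
        exact max_le_fixedPriceWelfare_add hb hs p
    _ = _ := by
        rw [integral_add hW hloss, integral_add hloss₁ hloss₂,
          integral_indicator_id_mul_indicator_one_prod μB μS measurableSet_Iic measurableSet_Iio,
          integral_indicator_id_mul_indicator_one_prod μB μS measurableSet_Ioi measurableSet_Ici]

lemma integral_le_integral_max_prod [IsProbabilityMeasure μS] (hiB : Integrable id μB)
    (hiS : Integrable id μS) : ∫ b, b ∂μB ≤ ∫ x, max x.1 x.2 ∂μB.prod μS := by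
  have h1 : Integrable Prod.fst (μB.prod μS) := hiB.comp_fst μS
  calc ∫ b, b ∂μB = ∫ x, x.1 ∂μB.prod μS := by
        rw [integral_fun_fst (fun b : ℝ => b)]; simp
    _ ≤ _ := integral_mono h1 (h1.sup (hiS.comp_snd μB)) fun x => le_max_left _ _

end

/-- Welfare-loss bound: if `q ≤ 1/5` and `r ≤ 1/5` then
`r(1−q) + (1−r)q = 1/2 − 2(1/2−q)(1/2−r) ≤ 8/25`; consequently a fixed price `p*` with
`P[S ≥ p*] ≤ 1/5` and `E[B·1_{B≤p*}]/E[B] ≤ 1/5` guarantees welfare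
`W(p*;F_S,F_B) ≥ (17/25)·OPT-W(F_S,F_B)`. -/
theorem stmt_18 :
    (∀ q r : ℝ, 0 ≤ q → q ≤ 1/5 → 0 ≤ r → r ≤ 1/5 →
      r * (1 - q) + (1 - r) * q = 1/2 - 2 * (1/2 - q) * (1/2 - r)
      ∧ r * (1 - q) + (1 - r) * q ≤ 8/25)
    ∧ ∀ (μS μB : Measure ℝ), IsProbabilityMeasure μS → IsProbabilityMeasure μB →
        μS (Set.Iio 0) = 0 → μB (Set.Iio 0) = 0 →
        Integrable id μS → Integrable id μB →
        0 < (∫ b, b ∂μB) →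
        ∀ p : ℝ, (μS (Set.Ici p)).toReal ≤ 1/5 →
          (∫ b in Set.Iic p, b ∂μB) / (∫ b, b ∂μB) ≤ 1/5 →
          (17/25) * (∫ q : ℝ × ℝ, max q.1 q.2 ∂(μB.prod μS))
            ≤ ∫ q : ℝ × ℝ, (q.2 + (q.1 - q.2) *
                Set.indicator {q : ℝ × ℝ | p < q.1 ∧ q.2 ≤ p} (fun _ => (1:ℝ)) q)
              ∂(μB.prod μS) := by
  refine ⟨fun q r _ hq _ hr =>
    ⟨mul_one_sub_add_one_sub_mul_eq q r, mul_one_sub_add_one_sub_mul_le hq hr⟩, ?_⟩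
  intro μS μB _ _ hS₀ hB₀ hiS hiB hE p (hq : μS.real (Ici p) ≤ 1/5) hr
  set r := (∫ b in Iic p, b ∂μB) / ∫ b, b ∂μB
  have hIic : ∫ b in Iic p, b ∂μB = r * ∫ b, b ∂μB := (div_mul_cancel₀ _ hE.ne').symm
  have hIoi : ∫ b in Ioi p, b ∂μB = (1 - r) * ∫ b, b ∂μB := by
    have := integral_add_compl (measurableSet_Iic (a := p)) hiB
    rw [compl_Iic] at this
    simp only [id] at this
    linarith
  have hIio : μS.real (Iio p) = 1 - μS.real (Ici p) := by
    rw [← compl_Ici, probReal_compl_eq_one_sub measurableSet_Ici]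
  have hloss := integral_max_le_integral_fixedPriceWelfare_add
    (ae_nonneg_of_measure_Iio_zero hB₀) (ae_nonneg_of_measure_Iio_zero hS₀) hiB hiS p
  rw [hIic, hIoi, hIio] at hloss
  have hmix := mul_le_mul_of_nonneg_right (mul_one_sub_add_one_sub_mul_le hq hr) hE.le
  have hE_le := integral_le_integral_max_prod hiB hiS
  change _ ≤ ∫ x, fixedPriceWelfare p x ∂μB.prod μS
  linarith
end

section
/- In the quantile-information game, against nature's strategy where y = 1 with probability 1/e and otherwise y has density 1/(e·y²) on [1/e, 1], every pure strategy x ∈ [0,1] of the designer yields expected payoff E[V(x,y)] ≤ 1 − 1/e, where V(x,y) = (1−y) + x·1_{x<y}. Specifically, E[V(x,y)] = 1 − 2/e + x for x ∈ [0,1/e] and E[V(x,y)] = 1 − 1/e for x ∈ [1/e, 1). -/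
/-! Writing `V(x, y) = (1 - y) + x·1_{x<y}`, the expectation is `E[1 - Y] + x·P(Y > x)`.
Against the atom `1/e` at `y = 1` and the density `1/(e y²)`, `E[1 - Y] = 1 - 2/e`, while
`P(Y > x)` equals `1` for `x ≤ 1/e` and `1/(e x)` for `1/e ≤ x < 1`: the density is tuned so that
`x·P(Y > x)` is constant, equal to `1/e`, on `[1/e, 1)`. At `x = 1`, `P(Y > 1) = 0` and the
expectation drops to `1 - 2/e`. -/

open MeasureTheory Set Filter

/-- Nature's mixed strategy: `y = 1` with probability `1/e`, and otherwise `y` has density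
`1/(e·y²)` on `(1/e, 1)`. -/
noncomputable def natureMeasure : Measure ℝ :=
  ENNReal.ofReal (1 / Real.exp 1) • Measure.dirac 1
  + (volume.restrict (Set.Ioo (1 / Real.exp 1) 1)).withDensity
      (fun y => ENNReal.ofReal (1 / (Real.exp 1 * y ^ 2)))

open Real

theorem integral_smul_dirac_add_withDensity_ofReal {α : Type*} [MeasurableSpace α]
    [MeasurableSingletonClass α] {μ : Measure α} {c : ℝ} {f g : α → ℝ} (a : α) (hc : 0 ≤ c)
    (hf : Measurable f) (hf0 : ∀ x, 0 ≤ f x) (hfg : Integrable (fun x => f x * g x) μ) :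
    ∫ x, g x ∂(ENNReal.ofReal c • Measure.dirac a + μ.withDensity fun x => ENNReal.ofReal (f x))
      = c * g a + ∫ x, f x * g x ∂μ := by
  have hdens : ∀ x, (ENNReal.ofReal (f x)).toReal = f x := fun x => ENNReal.toReal_ofReal (hf0 x)
  have hf' : Measurable fun x => ENNReal.ofReal (f x) := hf.ennreal_ofReal
  have hlt : ∀ᵐ x ∂μ, ENNReal.ofReal (f x) < ⊤ := ae_of_all _ fun _ => ENNReal.ofReal_lt_top
  rw [integral_add_measure
      ((integrable_dirac enorm_lt_top).smul_measure ENNReal.ofReal_ne_top)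
      ((integrable_withDensity_iff_integrable_smul' hf' hlt).2
        (by simpa only [hdens, smul_eq_mul] using hfg)),
    integral_smul_measure, integral_dirac, ENNReal.toReal_ofReal hc,
    integral_withDensity_eq_integral_toReal_smul hf' hlt]
  simp only [hdens, smul_eq_mul]

lemma one_div_exp_one_pos : 0 < 1 / exp 1 := by positivity

lemma one_div_exp_one_lt_one : 1 / exp 1 < 1 := by
  rw [div_lt_one (exp_pos 1)]; exact one_lt_exp_iff.2 one_pos

lemma integral_natureMeasure {g : ℝ → ℝ}
    (hg : IntegrableOn (fun y => g y / y ^ 2) (Ioo (1 / exp 1) 1)) :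
    ∫ y, g y ∂natureMeasure = (g 1 + ∫ y in Ioo (1 / exp 1) 1, g y / y ^ 2) / exp 1 := by
  have hdens : ∀ y, 1 / (exp 1 * y ^ 2) * g y = (exp 1)⁻¹ * (g y / y ^ 2) := fun y => by
    rw [one_div, mul_inv, mul_assoc, div_eq_inv_mul]
  rw [natureMeasure, integral_smul_dirac_add_withDensity_ofReal 1 one_div_exp_one_pos.le
      (by fun_prop) (fun y => by positivity) (by simpa only [hdens] using hg.const_mul (exp 1)⁻¹)]
  simp only [hdens, integral_const_mul]
  ring

lemma integral_Ioo_one_div_sq {a b : ℝ} (ha : 0 < a) (hab : a ≤ b) :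
    ∫ y in Ioo a b, 1 / y ^ 2 = 1 / a - 1 / b := by
  have h0 : (0 : ℝ) ∉ uIcc a b := by rw [uIcc_of_le hab]; exact fun h => ha.not_ge h.1
  rw [← integral_Ioc_eq_integral_Ioo, ← intervalIntegral.integral_of_le hab]
  simp_rw [one_div, ← zpow_natCast, ← zpow_neg]
  rw [integral_zpow (Or.inr ⟨by norm_num, h0⟩)]
  norm_num
  field_simp
  ring

lemma integral_Ioo_one_div {a b : ℝ} (ha : 0 < a) (hab : a ≤ b) :
    ∫ y in Ioo a b, 1 / y = log (b / a) := by
  have h0 : (0 : ℝ) ∉ uIcc a b := by rw [uIcc_of_le hab]; exact fun h => ha.not_ge h.1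
  rw [← integral_Ioc_eq_integral_Ioo, ← intervalIntegral.integral_of_le hab, integral_one_div h0]

lemma integrableOn_Ioo_div_pow {φ : ℝ → ℝ} {a b : ℝ} (hφ : Continuous φ) (ha : 0 < a) (n : ℕ) :
    IntegrableOn (fun y => φ y / y ^ n) (Ioo a b) :=
  (ContinuousOn.integrableOn_Icc <| hφ.continuousOn.div (continuousOn_pow n) fun _ hy =>
    pow_ne_zero n (ha.trans_le hy.1).ne').mono_set Ioo_subset_Icc_self

lemma integral_Ioo_one_sub_div_sq : ∫ y in Ioo (1 / exp 1) 1, (1 - y) / y ^ 2 = exp 1 - 2 := by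
  -- `y ^ 1` so that both terms are instances of `integrableOn_Ioo_div_pow`
  have hsplit : ∀ y ∈ Ioo (1 / exp 1) 1, (1 - y) / y ^ 2 = 1 / y ^ 2 - 1 / y ^ 1 := fun y hy => by
    have : y ≠ 0 := (one_div_exp_one_pos.trans hy.1).ne'
    field_simp
  have hint (n : ℕ) :=
    integrableOn_Ioo_div_pow (φ := fun _ => 1) (b := 1) continuous_const one_div_exp_one_pos n
  rw [setIntegral_congr_fun measurableSet_Ioo hsplit, integral_sub (hint 2) (hint 1)]
  simp only [pow_one]
  rw [integral_Ioo_one_div_sq one_div_exp_one_pos one_div_exp_one_lt_one.le,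
    integral_Ioo_one_div one_div_exp_one_pos one_div_exp_one_lt_one.le,
    one_div_one_div, div_one, log_exp]
  ring

noncomputable def payoff (x y : ℝ) : ℝ := (1 - y) + x * (Ioi x).indicator (fun _ => (1 : ℝ)) y

lemma payoff_div_sq (x y : ℝ) :
    payoff x y / y ^ 2 = (1 - y) / y ^ 2 + x * (Ioi x).indicator (fun y => 1 / y ^ 2) y := by
  by_cases h : x < y <;> simp only [payoff, indicator_apply, mem_Ioi, h, if_true, if_false] <;> ring

lemma integral_natureMeasure_payoff (x : ℝ) :
    ∫ y, payoff x y ∂natureMeasure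
      = (payoff x 1 + (exp 1 - 2) + x * ∫ y in Ioo (max (1 / exp 1) x) 1, 1 / y ^ 2) / exp 1 := by
  have hfirst := integrableOn_Ioo_div_pow (b := 1) (φ := fun y => 1 - y) (by fun_prop)
    one_div_exp_one_pos 2
  have hind : IntegrableOn (fun y => x * (Ioi x).indicator (fun y => 1 / y ^ 2) y)
      (Ioo (1 / exp 1) 1) :=
    ((integrableOn_Ioo_div_pow continuous_const one_div_exp_one_pos 2).indicator
      measurableSet_Ioi).const_mul x
  have hinter : Ioo (1 / exp 1) 1 ∩ Ioi x = Ioo (max (1 / exp 1) x) 1 := by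
    ext y; simp only [mem_inter_iff, mem_Ioo, mem_Ioi, max_lt_iff]; tauto
  have hpay : ∫ y in Ioo (1 / exp 1) 1, payoff x y / y ^ 2
      = (exp 1 - 2) + x * ∫ y in Ioo (max (1 / exp 1) x) 1, 1 / y ^ 2 := by
    simp_rw [payoff_div_sq]
    rw [integral_add hfirst hind, integral_Ioo_one_sub_div_sq, integral_const_mul,
      setIntegral_indicator measurableSet_Ioi, hinter]
  rw [integral_natureMeasure (by simp_rw [payoff_div_sq]; exact hfirst.add hind), hpay, add_assoc]

lemma payoff_one_of_lt {x : ℝ} (hx : x < 1) : payoff x 1 = x := by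
  simp [payoff, hx]

lemma integral_natureMeasure_payoff_of_le {x : ℝ} (hx : x ≤ 1 / exp 1) :
    ∫ y, payoff x y ∂natureMeasure = 1 - 2 / exp 1 + x := by
  rw [integral_natureMeasure_payoff, payoff_one_of_lt (hx.trans_lt one_div_exp_one_lt_one),
    max_eq_left hx, integral_Ioo_one_div_sq one_div_exp_one_pos one_div_exp_one_lt_one.le]
  field_simp
  ring

lemma integral_natureMeasure_payoff_of_mem_Ico {x : ℝ} (hx : x ∈ Ico (1 / exp 1) 1) :
    ∫ y, payoff x y ∂natureMeasure = 1 - 1 / exp 1 := by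
  rw [integral_natureMeasure_payoff, payoff_one_of_lt hx.2, max_eq_right hx.1,
    integral_Ioo_one_div_sq (one_div_exp_one_pos.trans_le hx.1) hx.2.le]
  have : x ≠ 0 := (one_div_exp_one_pos.trans_le hx.1).ne'
  field_simp
  ring

lemma integral_natureMeasure_payoff_one :
    ∫ y, payoff 1 y ∂natureMeasure = 1 - 2 / exp 1 := by
  have hpayoff : payoff 1 1 = 0 := by simp [payoff]
  rw [integral_natureMeasure_payoff, hpayoff, max_eq_right one_div_exp_one_lt_one.le, Ioo_self,
    Measure.restrict_empty, integral_zero_measure]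
  field_simp
  ring

/-- Against nature's strategy, every pure strategy `x ∈ [0,1]` of the designer yields
expected payoff `E[V(x,y)] ≤ 1 − 1/e`, where `V(x,y) = (1−y) + x·1_{x<y}`; specifically,
`E[V(x,y)] = 1 − 2/e + x` for `x ∈ [0,1/e]` and `E[V(x,y)] = 1 − 1/e` for `x ∈ [1/e, 1)`. -/
theorem stmt_19 :
    (∀ x ∈ Set.Icc (0:ℝ) 1,
      (∫ y, ((1 - y) + x * Set.indicator (Set.Ioi x) (fun _ => (1:ℝ)) y) ∂natureMeasure)
        ≤ 1 - 1 / Real.exp 1)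
    ∧ (∀ x ∈ Set.Icc (0:ℝ) (1 / Real.exp 1),
      (∫ y, ((1 - y) + x * Set.indicator (Set.Ioi x) (fun _ => (1:ℝ)) y) ∂natureMeasure)
        = 1 - 2 / Real.exp 1 + x)
    ∧ (∀ x ∈ Set.Ico (1 / Real.exp 1) (1:ℝ),
      (∫ y, ((1 - y) + x * Set.indicator (Set.Ioi x) (fun _ => (1:ℝ)) y) ∂natureMeasure)
        = 1 - 1 / Real.exp 1) := by
  refine ⟨fun x hx => ?_, fun x hx => integral_natureMeasure_payoff_of_le hx.2,
    fun x hx => integral_natureMeasure_payoff_of_mem_Ico hx⟩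
  change ∫ y, payoff x y ∂natureMeasure ≤ 1 - 1 / exp 1
  have htwo : 2 / exp 1 = 2 * (1 / exp 1) := by ring
  rcases le_or_gt x (1 / exp 1) with hle | hgt
  · rw [integral_natureMeasure_payoff_of_le hle]
    linarith
  rcases hx.2.lt_or_eq with hlt | rfl
  · exact (integral_natureMeasure_payoff_of_mem_Ico ⟨hgt.le, hlt⟩).le
  · rw [integral_natureMeasure_payoff_one]
    linarith [one_div_exp_one_pos]
end
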